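/- arXiv:2408.13693 — 2 statements merged into one kernel-verified Lean document; each statement's English description precedes it below -/
import Mathlib

section
/- Fix $1 < \sigma \le 2$. If real numbers $\xi, \xi_1, \xi_2, \xi_3$ satisfy $\xi_1 - \xi_2 + \xi_3 = \xi$ and $|\xi_1|^\sigma - |\xi_2|^\sigma + |\xi_3|^\sigma - |\xi|^\sigma = 0$, then $\{\xi_1, \xi_3\} = \{\xi_2, \xi\}$ (i.e., either $\xi_1 = \xi_2$ and $\xi_3 = \xi$, or $\xi_1 = \xi$ and $\xi_3 = \xi_2$). -/
open Set

lemma abs_rpow_strictConvexOn {σ : ℝ} (hσ : 1 < σ) :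
    StrictConvexOn ℝ Set.univ (fun x : ℝ => |x| ^ σ) := by
  have hσ0 : (0:ℝ) < σ := by linarith
  refine ⟨convex_univ, ?_⟩
  intro x _ y _ hxy t u ht hu htu
  simp only [smul_eq_mul]
  by_cases habs : |x| = |y|
  · -- then x = -y, y ≠ 0
    have hy0 : y ≠ 0 := by
      rintro rfl
      exact hxy (by simpa [abs_eq_zero] using habs)
    have hx : x = -y := by
      rcases abs_eq_abs.mp habs with h | h
      · exact absurd h hxy
      · exact h
    subst hx
    have h1 : |t * -y + u * y| = |u - t| * |y| := by
      rw [← abs_mul]; ring_nf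
    have h2 : |u - t| < 1 := by
      rw [abs_lt]; constructor <;> linarith
    have h3 : |t * -y + u * y| < |y| := by
      rw [h1]
      calc |u - t| * |y| < 1 * |y| := by
            apply mul_lt_mul_of_pos_right h2 (abs_pos.mpr hy0)
        _ = |y| := one_mul _
    calc |t * -y + u * y| ^ σ < |y| ^ σ :=
          Real.rpow_lt_rpow (abs_nonneg _) h3 hσ0
      _ = t * |(-y)| ^ σ + u * |y| ^ σ := by
            rw [abs_neg, show t * |y| ^ σ + u * |y| ^ σ = (t + u) * |y| ^ σ from by ring,
              htu, one_mul]
  · have key := (strictConvexOn_rpow hσ).2 (mem_Ici.mpr (abs_nonneg x))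
      (mem_Ici.mpr (abs_nonneg y)) habs ht hu htu
    simp only [smul_eq_mul] at key
    calc |t * x + u * y| ^ σ ≤ (t * |x| + u * |y|) ^ σ := by
          apply Real.rpow_le_rpow (abs_nonneg _)
          · calc |t * x + u * y| ≤ |t * x| + |u * y| := abs_add_le _ _
              _ = t * |x| + u * |y| := by
                  rw [abs_mul, abs_mul, abs_of_pos ht, abs_of_pos hu]
          · exact hσ0.le
      _ < t * |x| ^ σ + u * |y| ^ σ := key

/-- If `F` is strictly convex, `F (c - b) = F (c + b)`, and `|a| < |b|`,
then `F (c + a) < F (c + b)`. -/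
lemma strict_between {F : ℝ → ℝ} (hF : StrictConvexOn ℝ Set.univ F)
    {c a b : ℝ} (hab : |a| < |b|) (hsym : F (c - b) = F (c + b)) :
    F (c + a) < F (c + b) := by
  have hb0 : b ≠ 0 := by
    intro h; rw [h, abs_zero] at hab; exact absurd hab (not_lt.mpr (abs_nonneg a))
  set w1 : ℝ := (b - a) / (2 * b) with hw1
  set w2 : ℝ := (b + a) / (2 * b) with hw2
  have hne : (c - b : ℝ) ≠ c + b := by
    intro h; apply hb0; linarith [h]
  have hb2 : (0:ℝ) < (b - a) / (2*b) ∧ (0:ℝ) < (b + a) / (2*b) := by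
    rcases lt_or_gt_of_ne hb0 with hb | hb
    · have h1 : |b| = -b := abs_of_neg hb
      rw [h1, abs_lt] at hab
      constructor <;> { apply div_pos_of_neg_of_neg <;> linarith }
    · have h1 : |b| = b := abs_of_pos hb
      rw [h1, abs_lt] at hab
      constructor <;> { apply div_pos <;> linarith }
  have hsum : w1 + w2 = 1 := by
    rw [hw1, hw2]; field_simp; ring
  have key := hF.2 (mem_univ (c - b)) (mem_univ (c + b)) hne hb2.1 hb2.2 hsum
  simp only [smul_eq_mul] at key
  have hcomb : w1 * (c - b) + w2 * (c + b) = c + a := by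
    rw [hw1, hw2]; field_simp; ring
  rw [hcomb, hsym] at key
  calc F (c + a) < w1 * F (c + b) + w2 * F (c + b) := key
    _ = F (c + b) := by rw [← add_mul, hsum, one_mul]

/-- Triviality of the resonance manifold for `ω(ξ) = |ξ|^σ` with `1 < σ ≤ 2`. -/
theorem resonance_trivial (σ : ℝ) (hσ1 : 1 < σ) (hσ2 : σ ≤ 2)
    (ξ ξ1 ξ2 ξ3 : ℝ) (hsum : ξ1 - ξ2 + ξ3 = ξ)
    (hres : |ξ1| ^ σ - |ξ2| ^ σ + |ξ3| ^ σ - |ξ| ^ σ = 0) :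
    (ξ1 = ξ2 ∧ ξ3 = ξ) ∨ (ξ1 = ξ ∧ ξ3 = ξ2) := by
  have hconv := abs_rpow_strictConvexOn hσ1
  set s : ℝ := ξ1 + ξ3 with hs
  set F : ℝ → ℝ := fun x => |x| ^ σ + |s - x| ^ σ with hF
  have hFconv : StrictConvexOn ℝ Set.univ F := by
    refine ⟨convex_univ, ?_⟩
    intro x _ y _ hxy t u ht hu htu
    have h1 := hconv.2 (Set.mem_univ x) (Set.mem_univ y) hxy ht hu htu
    have h2 := hconv.2 (Set.mem_univ (s - x)) (Set.mem_univ (s - y))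
      (by intro h; exact hxy (by linarith)) ht hu htu
    simp only [smul_eq_mul] at h1 h2 ⊢
    have he : s - (t * x + u * y) = t * (s - x) + u * (s - y) := by
      linear_combination (-s) * htu
    simp only [hF]
    rw [he]
    linarith
  -- symmetry of F
  have hFsym : ∀ x : ℝ, F (s - x) = F x := by
    intro x
    simp only [hF]
    rw [show s - (s - x) = x by ring]
    ring
  -- F ξ1 = F ξ2
  have hs2 : s - ξ2 = ξ := by rw [hs]; linarith
  have hkey : F ξ1 = F ξ2 := by
    simp only [hF]
    rw [show s - ξ1 = ξ3 by rw [hs]; ring, hs2]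
    linarith
  -- write points relative to center c = s/2
  set c : ℝ := s / 2 with hc
  set a : ℝ := ξ1 - c with ha
  set b : ℝ := ξ2 - c with hb
  have ea : ξ1 = c + a := by rw [ha]; ring
  have eb : ξ2 = c + b := by rw [hb]; ring
  have eb' : ξ = c - b := by rw [hb, hc, ← hs2]; ring
  have ea' : ξ3 = c - a := by rw [ha, hc, hs]; ring
  have habs : |a| = |b| := by
    by_contra hne
    rcases lt_or_gt_of_ne hne with h | h
    · have hsym2 : F (c - b) = F (c + b) := by
        rw [show c - b = s - ξ2 by rw [hb, hc]; ring, ← eb]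
        exact hFsym ξ2
      have := strict_between hFconv h hsym2
      rw [← ea, ← eb] at this
      exact absurd hkey (ne_of_lt this)
    · have hsym2 : F (c - a) = F (c + a) := by
        rw [show c - a = s - ξ1 by rw [ha, hc]; ring, ← ea]
        exact hFsym ξ1
      have := strict_between hFconv h hsym2
      rw [← ea, ← eb] at this
      exact absurd hkey.symm (ne_of_lt this)
  rcases abs_eq_abs.mp habs with h | h
  · left
    constructor
    · rw [ea, eb, h]
    · rw [ea', eb', h]
  · right
    constructor
    · rw [ea, eb', h]; ring
    · rw [ea', eb, h]; ring
end

section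
/- Fix $1 < \sigma \le 2$. There exists a constant $c = c(\sigma) > 0$ such that for all real $x$ and all $\nu > 0$: if $|x| \le \nu$ then $|x+\nu|^\sigma + |x-\nu|^\sigma - 2|x|^\sigma \ge c\,\nu^\sigma$, and if $|x| > \nu$ then $|x+\nu|^\sigma + |x-\nu|^\sigma - 2|x|^\sigma \ge c\,\nu^2 |x|^{\sigma-2}$. -/
/-!
Write `y = |x|`; the left-hand side only depends on `y`. Near the origin (`y ≤ ν`) two crude
bounds, `(y + ν)^σ ≥ (2y)^σ` and midpoint convexity `(ν + y)^σ + (ν - y)^σ ≥ 2ν^σ`, combine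
into `c ν^σ`. Far from it (`ν < y`), scaling by `y` reduces to
`(1 + u)^σ + (1 - u)^σ ≥ 2 + σ(σ-1)/2 · u²` for `u = ν / y ∈ [0, 1]`, where the `+` term is
Bernoulli's inequality and the `-` term a second-order Taylor bound, which holds because
`t ↦ t^(σ-1)` is concave for `σ ≤ 2`.
-/

open Real Set

theorem one_sub_mul_add_mul_sq_le_rpow_one_sub {σ : ℝ} (hσ1 : 1 ≤ σ) (hσ2 : σ ≤ 2) {u : ℝ}
    (hu0 : 0 ≤ u) (hu1 : u ≤ 1) :
    1 - σ * u + σ * (σ - 1) / 2 * u ^ 2 ≤ (1 - u) ^ σ := by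
  let F : ℝ → ℝ := fun t ↦ (1 - t) ^ σ - (1 - σ * t + σ * (σ - 1) / 2 * t ^ 2)
  have hF : ∀ t, HasDerivAt F (σ - σ * (σ - 1) * t - σ * (1 - t) ^ (σ - 1)) t := by
    intro t
    have hpow : HasDerivAt (fun s : ℝ ↦ (1 - s) ^ σ) (σ * (1 - t) ^ (σ - 1) * (-1)) t :=
      (hasDerivAt_rpow_const (Or.inr hσ1)).comp t ((hasDerivAt_id t).const_sub 1)
    have hquad : HasDerivAt (fun s : ℝ ↦ 1 - σ * s + σ * (σ - 1) / 2 * s ^ 2)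
        (0 - σ * 1 + σ * (σ - 1) / 2 * (↑2 * t ^ 1)) t :=
      ((hasDerivAt_const t 1).sub ((hasDerivAt_id t).const_mul σ)).add
        ((hasDerivAt_pow 2 t).const_mul _)
    refine (hpow.sub hquad).congr_deriv ?_
    ring
  have hmono : MonotoneOn F (Icc 0 1) := by
    refine monotoneOn_of_deriv_nonneg (convex_Icc 0 1)
      (fun t _ ↦ (hF t).continuousAt.continuousWithinAt)
      (fun t _ ↦ (hF t).differentiableAt.differentiableWithinAt) fun t ht ↦ ?_
    rw [interior_Icc] at ht
    have hbernoulli : (1 - t) ^ (σ - 1) ≤ 1 - (σ - 1) * t := by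
      simpa [sub_eq_add_neg] using
        rpow_one_add_le_one_add_mul_self (s := -t) (by linarith [ht.2]) (p := σ - 1)
          (by linarith) (by linarith)
    rw [(hF t).deriv]
    nlinarith [mul_le_mul_of_nonneg_left hbernoulli (by linarith : (0 : ℝ) ≤ σ)]
  simpa [F] using hmono (left_mem_Icc.mpr zero_le_one) ⟨hu0, hu1⟩ hu0

theorem two_add_mul_sq_le_rpow_one_add_add_rpow_one_sub {σ : ℝ} (hσ1 : 1 ≤ σ) (hσ2 : σ ≤ 2)
    {u : ℝ} (hu0 : 0 ≤ u) (hu1 : u ≤ 1) :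
    2 + σ * (σ - 1) / 2 * u ^ 2 ≤ (1 + u) ^ σ + (1 - u) ^ σ := by
  linarith [one_add_mul_self_le_rpow_one_add (by linarith : -1 ≤ u) hσ1,
    one_sub_mul_add_mul_sq_le_rpow_one_sub hσ1 hσ2 hu0 hu1]

theorem mul_sq_mul_rpow_le_second_difference_of_ge {σ ν y : ℝ} (hσ1 : 1 ≤ σ) (hσ2 : σ ≤ 2)
    (hν : 0 ≤ ν) (hνy : ν ≤ y) (hy : 0 < y) :
    σ * (σ - 1) / 2 * ν ^ 2 * y ^ (σ - 2) ≤ (y + ν) ^ σ + (y - ν) ^ σ - 2 * y ^ σ := by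
  obtain ⟨u, rfl⟩ : ∃ u, ν = y * u := ⟨ν / y, by field_simp⟩
  have hu0 : 0 ≤ u := nonneg_of_mul_nonneg_right hν hy
  have hu1 : u ≤ 1 := by nlinarith
  have hy_rpow : y ^ σ = y ^ (σ - 2) * y ^ 2 := by
    rw [← rpow_natCast, ← rpow_add hy]; norm_num
  calc σ * (σ - 1) / 2 * (y * u) ^ 2 * y ^ (σ - 2)
      = y ^ σ * (2 + σ * (σ - 1) / 2 * u ^ 2) - 2 * y ^ σ := by rw [hy_rpow]; ring
    _ ≤ y ^ σ * ((1 + u) ^ σ + (1 - u) ^ σ) - 2 * y ^ σ := by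
      gcongr y ^ σ * ?_ - _
      exact two_add_mul_sq_le_rpow_one_add_add_rpow_one_sub hσ1 hσ2 hu0 hu1
    _ = (y + y * u) ^ σ + (y - y * u) ^ σ - 2 * y ^ σ := by
      rw [← mul_one_add, ← mul_one_sub, mul_rpow hy.le (by linarith),
        mul_rpow hy.le (by linarith)]
      ring

theorem mul_rpow_le_second_difference_of_le {σ ν y : ℝ} (hσ : 1 ≤ σ) (hy : 0 ≤ y)
    (hyν : y ≤ ν) :
    2 * (2 ^ σ - 2) / 2 ^ σ * ν ^ σ ≤ (y + ν) ^ σ + (ν - y) ^ σ - 2 * y ^ σ := by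
  have htwo : (2 : ℝ) ≤ 2 ^ σ := by
    simpa using rpow_le_rpow_of_exponent_le one_le_two hσ
  have hdouble : 2 ^ σ * y ^ σ ≤ (y + ν) ^ σ := by
    rw [← mul_rpow zero_le_two hy]
    exact rpow_le_rpow (by positivity) (by linarith) (by linarith)
  have hmidpoint : 2 * ν ^ σ ≤ (y + ν) ^ σ + (ν - y) ^ σ := by
    have hconvex := (convexOn_rpow hσ).2 (mem_Ici.mpr (by linarith : 0 ≤ y + ν))
      (mem_Ici.mpr (sub_nonneg.mpr hyν)) (by norm_num : (0 : ℝ) ≤ 1 / 2)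
      (by norm_num : (0 : ℝ) ≤ 1 / 2) (by norm_num)
    simp only [smul_eq_mul] at hconvex
    rw [show 1 / 2 * (y + ν) + 1 / 2 * (ν - y) = ν by ring] at hconvex
    linarith
  have hnonneg : 0 ≤ (ν - y) ^ σ := rpow_nonneg (sub_nonneg.mpr hyν) σ
  rw [div_mul_eq_mul_div, div_le_iff₀ (by positivity)]
  -- `2^σ = 2 + (2^σ - 2)`: weigh `hdouble` by `2` and `hmidpoint` by `2^σ - 2`.
  nlinarith [mul_le_mul_of_nonneg_left hmidpoint (sub_nonneg.mpr htwo)]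

theorem apply_abs_add_add_apply_abs_sub (f : ℝ → ℝ) (x : ℝ) {ν : ℝ} (hν : 0 ≤ ν) :
    f |x + ν| + f |x - ν| = f (|x| + ν) + f |(|x| - ν)| := by
  rcases le_total 0 x with hx | hx
  · rw [abs_of_nonneg hx, abs_of_nonneg (by linarith : 0 ≤ x + ν)]
  · rw [abs_of_nonpos hx, abs_of_nonpos (by linarith : x - ν ≤ 0), add_comm,
      ← abs_neg (x + ν)]
    ring_nf

/-- Second-difference (discrete convexity) lower bound for `t ↦ |t|^σ`, `1 < σ ≤ 2`. -/
theorem second_difference_lower (σ : ℝ) (hσ1 : 1 < σ) (hσ2 : σ ≤ 2) :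
    ∃ c : ℝ, 0 < c ∧ ∀ x ν : ℝ, 0 < ν →
      ((|x| ≤ ν → |x + ν| ^ σ + |x - ν| ^ σ - 2 * |x| ^ σ ≥ c * ν ^ σ) ∧
       (|x| > ν → |x + ν| ^ σ + |x - ν| ^ σ - 2 * |x| ^ σ ≥ c * ν ^ 2 * |x| ^ (σ - 2))) := by
  have htwo : (2 : ℝ) < 2 ^ σ := by
    simpa using rpow_lt_rpow_of_exponent_lt one_lt_two hσ1
  refine ⟨min (2 * (2 ^ σ - 2) / 2 ^ σ) (σ * (σ - 1) / 2),
    lt_min (by have := sub_pos.mpr htwo; positivity) (by nlinarith), fun x ν hν ↦ ?_⟩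
  rw [apply_abs_add_add_apply_abs_sub (· ^ σ) x hν.le]
  refine ⟨fun hxν ↦ ?_, fun hxν ↦ ?_⟩
  · rw [abs_sub_comm, abs_of_nonneg (sub_nonneg.mpr hxν)]
    exact (mul_le_mul_of_nonneg_right (min_le_left _ _) (by positivity)).trans
      (mul_rpow_le_second_difference_of_le hσ1.le (abs_nonneg x) hxν)
  · rw [abs_of_pos (sub_pos.mpr hxν)]
    exact (mul_le_mul_of_nonneg_right (mul_le_mul_of_nonneg_right (min_le_right _ _)
      (by positivity)) (by positivity)).trans
      (mul_sq_mul_rpow_le_second_difference_of_ge hσ1.le hσ2 hν.le hxν.le (hν.trans hxν))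
end
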